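/- arXiv:1701.07344 — 4 statements merged into one kernel-verified Lean document; each statement's English description precedes it below -/
import Mathlib

section
/- For N ≥ 3, each port impedance matrix T_n with nonzero off-diagonal coupling has exactly one positive eigenvalue, one negative eigenvalue, and N−2 zero eigenvalues; hence T_n is indefinite and singular. -/
/-! The matrix `T_n` is the Hermitian part of the rank-one matrix `e_n e_nᵀ Z`, so its rank is at
most two and at most two of its eigenvalues are nonzero. Its trace is `Re Z_nn = R_n > 0`, so some
eigenvalue is positive. If `M_nm ≠ 0` then `m ≠ n`, `(T_n)_mm = 0` and `(T_n)_nm = jωM_nm / 2 ≠ 0`: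
the principal `2 × 2` minor on `{n, m}` is negative, so `T_n` is not positive semidefinite and some
eigenvalue is negative. -/

open Matrix
open scoped ComplexOrder

namespace Matrix

variable {m n 𝕜 : Type*}

theorem rank_add_le {K : Type*} [Field K] [Finite m] [Fintype n] (A B : Matrix m n K) :
    (A + B).rank ≤ A.rank + B.rank := by
  rw [rank, mulVecLin_add]
  exact (Submodule.finrank_mono (LinearMap.range_add_le _ _)).trans
    (Submodule.finrank_add_le_finrank_add_finrank _ _)

theorem rank_single_le_one {R : Type*} [CommSemiring R] [StrongRankCondition R] [DecidableEq m]
    [DecidableEq n] [Fintype n] (i : m) (j : n) (c : R) : (single i j c).rank ≤ 1 := by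
  refine (rank_le_card_of_support_subset _ {i} fun k hk => ?_).trans (Finset.card_singleton i).le
  by_contra hki
  exact hk (funext fun l => single_apply_of_row_ne (Ne.symm (by simpa using hki)) j l c)

theorem PosSemidef.apply_eq_zero_of_diag_eq_zero [RCLike 𝕜] {A : Matrix n n 𝕜} (hA : A.PosSemidef)
    {j : n} (hj : A j j = 0) (i : n) : A i j = 0 := by
  have hdet := (hA.submatrix ![i, j]).det_nonneg
  simp only [det_fin_two, submatrix_apply, cons_val_zero, cons_val_one, hj, mul_zero, zero_sub,
    ← hA.1.apply j i, RCLike.star_def, RCLike.mul_conj] at hdet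
  have : ‖A i j‖ ^ 2 ≤ 0 := by exact_mod_cast neg_nonneg.mp hdet
  simpa using this

namespace IsHermitian

variable [RCLike 𝕜] [Fintype n] [DecidableEq n] {A : Matrix n n 𝕜} (hA : A.IsHermitian)

theorem exists_eigenvalues_pos_of_re_trace_pos (h : 0 < RCLike.re A.trace) :
    ∃ i, 0 < hA.eigenvalues i := by
  by_contra! hle
  rw [hA.trace_eq_sum_eigenvalues, map_sum] at h
  simp only [RCLike.ofReal_re] at h
  exact h.not_ge (Finset.sum_nonpos fun i _ => hle i)

theorem exists_eigenvalues_neg_of_apply_ne_zero {i j : n} (hj : A j j = 0) (hij : A i j ≠ 0) :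
    ∃ k, hA.eigenvalues k < 0 := by
  by_contra! hnonneg
  exact hij ((hA.posSemidef_iff_eigenvalues_nonneg.mpr hnonneg).apply_eq_zero_of_diag_eq_zero hj i)

theorem eigenvalues_eq_zero_of_rank_le_two (hrank : A.rank ≤ 2) {j k : n} (hjk : j ≠ k)
    (hj : hA.eigenvalues j ≠ 0) (hk : hA.eigenvalues k ≠ 0) {l : n} (hlj : l ≠ j) (hlk : l ≠ k) :
    hA.eigenvalues l = 0 := by
  by_contra hl
  have hcard : 2 < (Finset.univ.filter fun i => hA.eigenvalues i ≠ 0).card :=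
    Finset.two_lt_card.mpr ⟨j, by simpa, k, by simpa, l, by simpa, hjk, hlj.symm, hlk.symm⟩
  rw [← Fintype.card_subtype, ← hA.rank_eq_card_non_zero_eigs] at hcard
  omega

end IsHermitian

section HermitianPart

variable [RCLike 𝕜] (B : Matrix n n 𝕜)

theorem half_smul_add_conjTranspose_apply (i j : n) :
    ((1 / 2 : 𝕜) • (B + Bᴴ)) i j = (B i j + star (B j i)) / 2 := by
  simp [div_eq_inv_mul]

variable [Fintype n]

theorem re_trace_half_smul_add_conjTranspose :
    RCLike.re ((1 / 2 : 𝕜) • (B + Bᴴ)).trace = RCLike.re B.trace := by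
  rw [trace_smul, trace_add, trace_conjTranspose, RCLike.star_def, RCLike.add_conj]
  simp

theorem rank_half_smul_add_conjTranspose_le :
    ((1 / 2 : 𝕜) • (B + Bᴴ)).rank ≤ 2 * B.rank := by
  rw [rank_smul_of_mem_nonZeroDivisors _ (mem_nonZeroDivisors_of_ne_zero (by norm_num)), two_mul]
  exact (rank_add_le B Bᴴ).trans_eq (by rw [rank_conjTranspose])

end HermitianPart

end Matrix

theorem port_impedance_matrix_eigenvalue_signs_general
    {N : ℕ} (ω : ℝ) (hω : ω ≠ 0)
    (R L : Fin N → ℝ) (M : Matrix (Fin N) (Fin N) ℂ)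
    (hMdiag : ∀ i, M i i = 0)
    (n : Fin N) (hR : 0 < R n) (hMn : ∃ m, M n m ≠ 0)
    (Z : Matrix (Fin N) (Fin N) ℂ)
    (hZ : Z = Matrix.diagonal (fun i => (R i : ℂ))
        + (Complex.I * (ω : ℂ)) • Matrix.diagonal (fun i => (L i : ℂ))
        + (Complex.I * (ω : ℂ)) • M)
    (T : Matrix (Fin N) (Fin N) ℂ)
    (hT : T = (1 / 2 : ℂ) • (Matrix.single n n (1 : ℂ) * Z
        + Zᴴ * Matrix.single n n (1 : ℂ)))
    (hTh : T.IsHermitian) :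
    ∃ j k : Fin N, j ≠ k ∧ 0 < hTh.eigenvalues j ∧ hTh.eigenvalues k < 0 ∧
      ∀ m : Fin N, m ≠ j → m ≠ k → hTh.eigenvalues m = 0 := by
  obtain ⟨m, hm⟩ := hMn
  have hmn : m ≠ n := fun h => hm (h ▸ hMdiag m)
  have hZnn : (Z n n).re = R n := by simp [hZ, hMdiag n]
  have hZnm : Z n m ≠ 0 := by simp [hZ, hmn.symm, hω, hm]
  rw [show Zᴴ * single n n 1 = (single n n 1 * Z)ᴴ by
    rw [conjTranspose_mul, conjTranspose_single, star_one]] at hT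
  have hB : ∀ i j, i ≠ n → (single n n (1 : ℂ) * Z) i j = 0 := fun i j hi =>
    single_mul_apply_of_ne _ _ _ _ _ hi Z
  obtain ⟨j, hj⟩ := hTh.exists_eigenvalues_pos_of_re_trace_pos <| by
    rw [hT, re_trace_half_smul_add_conjTranspose, trace_single_mul, one_smul]
    simpa [hZnn]
  obtain ⟨k, hk⟩ := hTh.exists_eigenvalues_neg_of_apply_ne_zero (i := n) (j := m)
    (by rw [hT, half_smul_add_conjTranspose_apply, hB m m hmn, star_zero, add_zero, zero_div])
    (by
      rw [hT, half_smul_add_conjTranspose_apply, hB m n hmn, star_zero, add_zero,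
        single_mul_apply_same, one_mul]
      exact div_ne_zero hZnm two_ne_zero)
  have hjk : j ≠ k := fun h => (hj.trans (h ▸ hk)).false
  have hrank : T.rank ≤ 2 := hT ▸ (rank_half_smul_add_conjTranspose_le _).trans
    (by simpa using (rank_mul_le_left _ Z).trans (rank_single_le_one n n (1 : ℂ)))
  exact ⟨j, k, hjk, hj, hk, fun l hlj hlk =>
    hTh.eigenvalues_eq_zero_of_rank_le_two hrank hjk hj.ne' hk.ne hlj hlk⟩

/-- For `N ≥ 3`, each port impedance matrix `T_n` (with `R_n > 0` and nonzero
off-diagonal coupling in row `n`) has exactly one positive eigenvalue,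
one negative eigenvalue, and `N − 2` zero eigenvalues. -/
theorem port_impedance_matrix_eigenvalue_signs
    {N : ℕ} (hN : 3 ≤ N) (ω : ℝ) (hω : ω ≠ 0)
    (R L : Fin N → ℝ) (M : Matrix (Fin N) (Fin N) ℂ)
    (hMsymm : M.IsSymm) (hMdiag : ∀ i, M i i = 0)
    (n : Fin N) (hR : 0 < R n) (hMn : ∃ m, M n m ≠ 0)
    (Z : Matrix (Fin N) (Fin N) ℂ)
    (hZ : Z = Matrix.diagonal (fun i => (R i : ℂ))
        + (Complex.I * (ω : ℂ)) • Matrix.diagonal (fun i => (L i : ℂ))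
        + (Complex.I * (ω : ℂ)) • M)
    (T : Matrix (Fin N) (Fin N) ℂ)
    (hT : T = (1 / 2 : ℂ) • (Matrix.single n n (1 : ℂ) * Z
        + Zᴴ * Matrix.single n n (1 : ℂ)))
    (hTh : T.IsHermitian) :
    ∃ j k : Fin N, j ≠ k ∧ 0 < hTh.eigenvalues j ∧ hTh.eigenvalues k < 0 ∧
      ∀ m : Fin N, m ≠ j → m ≠ k → hTh.eigenvalues m = 0 :=
  port_impedance_matrix_eigenvalue_signs_general ω hω R L M hMdiag n hR hMn Z hZ T hT hTh
end

section
/- The nonzero eigenvalues of the port impedance matrix T_n are λ = (1/2)(R_n ± sqrt(S_n² + R_n²)), where S_n² = ω² ∑_m |M_{n,m}|²; in particular the positive eigenvalue exceeds R_n/2 and the negative eigenvalue is −(1/2)(sqrt(S_n²+R_n²) − R_n) < 0 whenever S_n > 0. -/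
/-!
`T_n` vanishes outside row and column `n`; its row `n` is `(R_n, t)` with `t_j = iω M_{n,j} / 2`
and its column `n` is the conjugate. For an eigenvector `v` with eigenvalue `μ ≠ 0` the rows
`j ≠ n` give `μ v_j = conj(t_j) v_n`, so `v_n ≠ 0`, and row `n` multiplied by `μ` becomes
`μ² = R_n μ + ∑ |t_j|² = R_n μ + S_n² / 4`. Conversely, for each root `μ` of this quadratic the
vector `(μ, conj t)` is an eigenvector. Both roots are nonzero, their product being
`-S_n² / 4 < 0`.
-/

open Matrix Finset RCLike

namespace Matrix

variable {𝕜 ι : Type*} [RCLike 𝕜] [Fintype ι]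

theorem mulVec_apply_eq_mul_of_ne {A : Matrix ι ι 𝕜} {n : ι}
    (hA0 : ∀ i j, i ≠ n → j ≠ n → A i j = 0) (v : ι → 𝕜) {i : ι} (hi : i ≠ n) :
    (A *ᵥ v) i = A i n * v n :=
  sum_eq_single n (fun j _ hj => mul_eq_zero_of_left (hA0 i j hi hj) _)
    (fun h => (h (mem_univ n)).elim)

variable [DecidableEq ι]

theorem IsHermitian.exists_eigenvalues_eq_iff {A : Matrix ι ι 𝕜} (hA : A.IsHermitian) (μ : ℝ) :
    (∃ i, hA.eigenvalues i = μ) ↔ ∃ v ≠ 0, A *ᵥ v = (μ : 𝕜) • v := by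
  rw [← Set.mem_range, ← hA.spectrum_real_eq_range_eigenvalues, ← spectrum.algebraMap_mem_iff 𝕜,
    ← spectrum_toLin', ← Module.End.hasEigenvalue_iff_mem_spectrum]
  constructor
  · intro h
    obtain ⟨v, hv⟩ := h.exists_hasEigenvector
    exact ⟨v, hv.2, by simpa using Module.End.mem_eigenspace_iff.1 hv.1⟩
  · rintro ⟨v, hv0, hv⟩
    exact Module.End.hasEigenvalue_of_hasEigenvector
      ⟨Module.End.mem_eigenspace_iff.2 (by simpa using hv), hv0⟩

theorem mulVec_apply_eq_add_sum_erase (A : Matrix ι ι 𝕜) (v : ι → 𝕜) (n : ι) :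
    (A *ᵥ v) n = A n n * v n + ∑ j ∈ univ.erase n, A n j * v j :=
  (add_sum_erase _ _ (mem_univ n)).symm

theorem IsHermitian.sum_erase_mul_apply_eq {A : Matrix ι ι 𝕜} (hA : A.IsHermitian) (n : ι) :
    ∑ j ∈ univ.erase n, A n j * A j n = ((∑ j ∈ univ.erase n, ‖A n j‖ ^ 2 : ℝ) : 𝕜) := by
  push_cast
  refine sum_congr rfl fun j _ => ?_
  rw [← hA.apply j n, ← RCLike.mul_conj]
  rfl

section RowAndColumnSupported

variable {A : Matrix ι ι 𝕜} {n : ι}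

theorem IsHermitian.sq_eq_of_mulVec_eq_smul (hA : A.IsHermitian)
    (hA0 : ∀ i j, i ≠ n → j ≠ n → A i j = 0) {v : ι → 𝕜} {μ : ℝ} (hμ : μ ≠ 0) (hv0 : v ≠ 0)
    (hv : A *ᵥ v = (μ : 𝕜) • v) :
    μ ^ 2 = re (A n n) * μ + ∑ j ∈ univ.erase n, ‖A n j‖ ^ 2 := by
  have hcol : ∀ j ≠ n, (μ : 𝕜) * v j = A j n * v n := fun j hj => by
    rw [← mulVec_apply_eq_mul_of_ne hA0 v hj, hv, Pi.smul_apply, smul_eq_mul]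
  have hvn : v n ≠ 0 := by
    refine fun h => hv0 (funext fun j => ?_)
    by_cases hj : j = n
    · rw [hj, h, Pi.zero_apply]
    · simpa [h, hμ] using hcol j hj
  have hrow : (μ : 𝕜) * v n = A n n * v n + ∑ j ∈ univ.erase n, A n j * v j := by
    rw [← mulVec_apply_eq_add_sum_erase A, hv, Pi.smul_apply, smul_eq_mul]
  have key : ((μ : 𝕜) ^ 2 - (A n n * μ + ∑ j ∈ univ.erase n, A n j * A j n)) * v n = 0 := by
    have hsum : (μ : 𝕜) * ∑ j ∈ univ.erase n, A n j * v j
        = (∑ j ∈ univ.erase n, A n j * A j n) * v n := by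
      rw [mul_sum, sum_mul]
      refine sum_congr rfl fun j hj => ?_
      rw [mul_left_comm, hcol j (ne_of_mem_erase hj), mul_assoc]
    linear_combination (μ : 𝕜) * hrow + hsum
  rw [hA.sum_erase_mul_apply_eq, ← hA.coe_re_apply_self n] at key
  exact_mod_cast sub_eq_zero.1 ((mul_eq_zero.1 key).resolve_right hvn)

theorem IsHermitian.mulVec_update_eq_smul (hA : A.IsHermitian)
    (hA0 : ∀ i j, i ≠ n → j ≠ n → A i j = 0) {μ : ℝ}
    (hμ : μ ^ 2 = re (A n n) * μ + ∑ j ∈ univ.erase n, ‖A n j‖ ^ 2) :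
    A *ᵥ Function.update (fun i => A i n) n (μ : 𝕜)
      = (μ : 𝕜) • Function.update (fun i => A i n) n (μ : 𝕜) := by
  funext i
  rw [Pi.smul_apply, smul_eq_mul]
  by_cases hi : i = n
  · subst hi
    have hμ' : (μ : 𝕜) ^ 2 = A i i * μ + ∑ j ∈ univ.erase i, A i j * A j i := by
      rw [hA.sum_erase_mul_apply_eq, ← hA.coe_re_apply_self i]
      exact_mod_cast hμ
    rw [mulVec_apply_eq_add_sum_erase, Function.update_self,
      sum_congr rfl fun j hj => by rw [Function.update_of_ne (ne_of_mem_erase hj)]]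
    linear_combination -hμ'
  · rw [mulVec_apply_eq_mul_of_ne hA0 _ hi, Function.update_self, Function.update_of_ne hi,
      mul_comm]

theorem IsHermitian.exists_eigenvalues_eq_iff_sq_eq (hA : A.IsHermitian)
    (hA0 : ∀ i j, i ≠ n → j ≠ n → A i j = 0) {μ : ℝ} (hμ : μ ≠ 0) :
    (∃ i, hA.eigenvalues i = μ) ↔ μ ^ 2 = re (A n n) * μ + ∑ j ∈ univ.erase n, ‖A n j‖ ^ 2 := by
  rw [hA.exists_eigenvalues_eq_iff]
  constructor
  · rintro ⟨v, hv0, hv⟩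
    exact hA.sq_eq_of_mulVec_eq_smul hA0 hμ hv0 hv
  · refine fun h => ⟨_, fun h0 => hμ ?_, hA.mulVec_update_eq_smul hA0 h⟩
    simpa using congrFun h0 n

end RowAndColumnSupported

def portImpedance (Z : Matrix ι ι 𝕜) (n : ι) : Matrix ι ι 𝕜 :=
  (1 / 2 : 𝕜) • (single n n 1 * Z + Zᴴ * single n n 1)

variable (Z : Matrix ι ι 𝕜) {n : ι}

theorem portImpedance_apply_of_ne_of_ne {i j : ι} (hi : i ≠ n) (hj : j ≠ n) :
    portImpedance Z n i j = 0 := by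
  simp [portImpedance, single_mul_apply_of_ne _ _ _ _ _ hi, mul_single_apply_of_ne _ _ _ _ _ hj]

theorem portImpedance_row_apply_of_ne {j : ι} (hj : j ≠ n) :
    portImpedance Z n n j = Z n j / 2 := by
  simp [portImpedance, mul_single_apply_of_ne _ _ _ _ _ hj]
  ring

theorem portImpedance_apply_self : portImpedance Z n n n = re (Z n n) := by
  simp only [portImpedance, smul_apply, add_apply, single_mul_apply_same, mul_single_apply_same,
    conjTranspose_apply, one_mul, mul_one, smul_eq_mul]
  rw [RCLike.star_def, RCLike.add_conj]
  ring

end Matrix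

theorem sq_eq_mul_add_quarter_iff {a d μ : ℝ} (hd : 0 ≤ d + a ^ 2) :
    μ ^ 2 = a * μ + d / 4 ↔
      μ = 1 / 2 * (a + √(d + a ^ 2)) ∨ μ = 1 / 2 * (a - √(d + a ^ 2)) := by
  have hdiscrim : discrim 1 (-a) (-(d / 4)) = √(d + a ^ 2) * √(d + a ^ 2) := by
    rw [Real.mul_self_sqrt hd, discrim]
    ring
  convert quadratic_eq_zero_iff one_ne_zero hdiscrim μ using 1
  · constructor <;> intro h <;> linear_combination h
  · ring_nf

theorem port_impedance_matrix_eigenvalue_values_general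
    {N : ℕ} (ω : ℝ)
    (R L : Fin N → ℝ) (M : Matrix (Fin N) (Fin N) ℂ)
    (hMdiag : ∀ i, M i i = 0)
    (n : Fin N)
    (S2 : ℝ) (hS2 : S2 = ω ^ 2 * ∑ m : Fin N, ‖M n m‖ ^ 2)
    (hS2pos : 0 < S2)
    (Z : Matrix (Fin N) (Fin N) ℂ)
    (hZ : Z = Matrix.diagonal (fun i => (R i : ℂ))
        + (Complex.I * (ω : ℂ)) • Matrix.diagonal (fun i => (L i : ℂ))
        + (Complex.I * (ω : ℂ)) • M)
    (T : Matrix (Fin N) (Fin N) ℂ)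
    (hT : T = (1 / 2 : ℂ) • (Matrix.single n n (1 : ℂ) * Z
        + Zᴴ * Matrix.single n n (1 : ℂ)))
    (hTh : T.IsHermitian)
    (lamPos lamNeg : ℝ)
    (hlp : lamPos = (1 / 2) * (R n + Real.sqrt (S2 + (R n) ^ 2)))
    (hln : lamNeg = (1 / 2) * (R n - Real.sqrt (S2 + (R n) ^ 2))) :
    (∀ m : Fin N, hTh.eigenvalues m ≠ 0 →
        hTh.eigenvalues m = lamPos ∨ hTh.eigenvalues m = lamNeg) ∧
    (∃ j, hTh.eigenvalues j = lamPos) ∧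
    (∃ k, hTh.eigenvalues k = lamNeg) ∧
    R n / 2 < lamPos ∧ lamNeg < 0 := by
  change T = portImpedance Z n at hT
  subst hT
  have hZnn : RCLike.re (Z n n) = R n := by simp [hZ, hMdiag]
  have hZn : ∀ j ≠ n, ‖Z n j / 2‖ ^ 2 = ω ^ 2 * ‖M n j‖ ^ 2 / 4 := fun j hj => by
    simp [hZ, hj.symm, div_pow, mul_pow]
    norm_num
  have hsum : ∑ j ∈ univ.erase n, ‖portImpedance Z n n j‖ ^ 2 = S2 / 4 := by
    rw [hS2, mul_sum, sum_div,
      ← sum_erase univ (f := fun j => ω ^ 2 * ‖M n j‖ ^ 2 / 4) (a := n) (by simp [hMdiag])]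
    exact sum_congr rfl fun j hj => by
      rw [portImpedance_row_apply_of_ne _ (ne_of_mem_erase hj), hZn j (ne_of_mem_erase hj)]
  have hspec : ∀ μ : ℝ, μ ≠ 0 →
      ((∃ i, hTh.eigenvalues i = μ) ↔ μ = lamPos ∨ μ = lamNeg) := fun μ hμ => by
    rw [hTh.exists_eigenvalues_eq_iff_sq_eq (fun i j => portImpedance_apply_of_ne_of_ne Z) hμ,
      portImpedance_apply_self, RCLike.ofReal_re, hZnn, hsum, hlp, hln]
    exact sq_eq_mul_add_quarter_iff (by positivity)
  have hroot_ne_zero : ∀ μ, μ = lamPos ∨ μ = lamNeg → μ ≠ 0 := by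
    rintro μ hμ rfl
    have := (sq_eq_mul_add_quarter_iff (by positivity)).2 (hlp ▸ hln ▸ hμ)
    linarith
  have hR_lt_sqrt : R n < √(S2 + R n ^ 2) := calc
    R n ≤ √(R n ^ 2) := Real.le_sqrt_of_sq_le le_rfl
    _ < √(S2 + R n ^ 2) := Real.sqrt_lt_sqrt (sq_nonneg _) (by linarith)
  refine ⟨fun m hm => (hspec _ hm).1 ⟨m, rfl⟩,
    (hspec _ (hroot_ne_zero _ (.inl rfl))).2 (.inl rfl),
    (hspec _ (hroot_ne_zero _ (.inr rfl))).2 (.inr rfl), ?_, ?_⟩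
  · have : 0 < √(S2 + R n ^ 2) := Real.sqrt_pos.2 (by positivity)
    rw [hlp]; linarith
  · rw [hln]; linarith

/-- The nonzero eigenvalues of the port impedance matrix `T_n` are
`λ± = (1/2)(R_n ± √(S_n² + R_n²))` with `S_n² = ω² ∑ₘ |M_{n,m}|²`; in particular the
positive eigenvalue exceeds `R_n / 2` and the negative one is
`−(1/2)(√(S_n² + R_n²) − R_n) < 0` whenever `S_n > 0`. -/
theorem port_impedance_matrix_eigenvalue_values
    {N : ℕ} (ω : ℝ)
    (R L : Fin N → ℝ) (M : Matrix (Fin N) (Fin N) ℂ)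
    (hMsymm : M.IsSymm) (hMdiag : ∀ i, M i i = 0)
    (n : Fin N) (hR : 0 < R n)
    (S2 : ℝ) (hS2 : S2 = ω ^ 2 * ∑ m : Fin N, ‖M n m‖ ^ 2)
    (hS2pos : 0 < S2)
    (Z : Matrix (Fin N) (Fin N) ℂ)
    (hZ : Z = Matrix.diagonal (fun i => (R i : ℂ))
        + (Complex.I * (ω : ℂ)) • Matrix.diagonal (fun i => (L i : ℂ))
        + (Complex.I * (ω : ℂ)) • M)
    (T : Matrix (Fin N) (Fin N) ℂ)
    (hT : T = (1 / 2 : ℂ) • (Matrix.single n n (1 : ℂ) * Z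
        + Zᴴ * Matrix.single n n (1 : ℂ)))
    (hTh : T.IsHermitian)
    (lamPos lamNeg : ℝ)
    (hlp : lamPos = (1 / 2) * (R n + Real.sqrt (S2 + (R n) ^ 2)))
    (hln : lamNeg = (1 / 2) * (R n - Real.sqrt (S2 + (R n) ^ 2))) :
    (∀ m : Fin N, hTh.eigenvalues m ≠ 0 →
        hTh.eigenvalues m = lamPos ∨ hTh.eigenvalues m = lamNeg) ∧
    (∃ j, hTh.eigenvalues j = lamPos) ∧
    (∃ k, hTh.eigenvalues k = lamNeg) ∧
    R n / 2 < lamPos ∧ lamNeg < 0 :=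
  port_impedance_matrix_eigenvalue_values_general ω R L M hMdiag n S2 hS2 hS2pos Z hZ T hT hTh
    lamPos lamNeg hlp hln
end

section
/- The maximum achievable PTE η_max = U²/(1 + sqrt(1+U²))² with optimal load R_L* = z_o' sqrt(1+U²) is the maximum over R_L > 0 of the resonant PTE η_res(R_L) = [U²/(1 + R_L/z_o' + U²)] · [R_L/(R_L + z_o')]. -/
/-!
In the normalised load `x = R_L / z_o'`, with `s = √(1 + U²)` the efficiency reads
`U² x / ((x + s²)(x + 1))`, and `(x + s²)(x + 1) - (1 + s)² x = (x - s)²`. Hence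
`η ≤ U² / (1 + s)²`, with equality exactly at `x = s`.
-/

/-- The resonant PTE as a function of the normalised load `x = R_L / z_o'`. -/
noncomputable def resonantPTE (U x : ℝ) : ℝ :=
  U ^ 2 / (1 + x + U ^ 2) * (x / (x + 1))

theorem one_add_sq_mul_le_add_sq_mul_add_one (x s : ℝ) :
    (1 + s) ^ 2 * x ≤ (x + s ^ 2) * (x + 1) := by
  nlinarith [sq_nonneg (x - s)]

theorem div_add_eq_div_div_add_one (x : ℝ) {z : ℝ} (hz : z ≠ 0) :
    x / (x + z) = x / z / (x / z + 1) := by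
  rw [div_add_one hz, div_div_div_cancel_right₀ hz]

theorem resonantPTE_le (U : ℝ) {x : ℝ} (hx : 0 ≤ x) :
    resonantPTE U x ≤ U ^ 2 / (1 + √(1 + U ^ 2)) ^ 2 := by
  set s := √(1 + U ^ 2)
  have hs : s ^ 2 = 1 + U ^ 2 := Real.sq_sqrt (by positivity)
  have hs0 : 0 ≤ s := Real.sqrt_nonneg _
  rw [resonantPTE, div_mul_div_comm, div_le_div_iff₀ (by positivity) (by positivity)]
  calc U ^ 2 * x * (1 + s) ^ 2 = U ^ 2 * ((1 + s) ^ 2 * x) := by ring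
    _ ≤ U ^ 2 * ((x + s ^ 2) * (x + 1)) :=
      mul_le_mul_of_nonneg_left (one_add_sq_mul_le_add_sq_mul_add_one x s) (sq_nonneg U)
    _ = U ^ 2 * ((1 + x + U ^ 2) * (x + 1)) := by rw [hs]; ring

theorem resonantPTE_sqrt (U : ℝ) :
    resonantPTE U √(1 + U ^ 2) = U ^ 2 / (1 + √(1 + U ^ 2)) ^ 2 := by
  set s := √(1 + U ^ 2)
  have hs : s ^ 2 = 1 + U ^ 2 := Real.sq_sqrt (by positivity)
  have hs0 : 0 < s := Real.sqrt_pos.mpr (by positivity)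
  have hfactor : 1 + s + U ^ 2 = s * (1 + s) := by linear_combination -hs
  rw [resonantPTE, hfactor]
  field_simp
  ring

theorem optimal_load_maximizes_resonant_pte_general
    (zo U : ℝ) (hzo : 0 < zo)
    (ηres : ℝ → ℝ)
    (hη : ∀ RL, ηres RL = (U ^ 2 / (1 + RL / zo + U ^ 2)) * (RL / (RL + zo)))
    (RLstar : ℝ) (hRLstar : RLstar = zo * Real.sqrt (1 + U ^ 2)) :
    ηres RLstar = U ^ 2 / (1 + Real.sqrt (1 + U ^ 2)) ^ 2 ∧
    ∀ RL > 0, ηres RL ≤ U ^ 2 / (1 + Real.sqrt (1 + U ^ 2)) ^ 2 := by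
  have hnormalise : ∀ RL, ηres RL = resonantPTE U (RL / zo) := fun RL => by
    rw [hη, resonantPTE, div_add_eq_div_div_add_one RL hzo.ne']
  refine ⟨?_, fun RL hRL => ?_⟩
  · rw [hnormalise, hRLstar, mul_div_cancel_left₀ _ hzo.ne', resonantPTE_sqrt]
  · rw [hnormalise]
    exact resonantPTE_le U (div_nonneg hRL.le hzo.le)

/-- The maximum achievable PTE `η_max = U²/(1 + √(1+U²))²`, attained at the optimal
load `R_L⋆ = z_o' √(1+U²)`, is the maximum over `R_L > 0` of the resonant PTE
`η_res(R_L) = [U²/(1 + R_L/z_o' + U²)] · [R_L/(R_L + z_o')]`. -/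
theorem optimal_load_maximizes_resonant_pte
    (zo U : ℝ) (hzo : 0 < zo) (hU : 0 < U)
    (ηres : ℝ → ℝ)
    (hη : ∀ RL, ηres RL = (U ^ 2 / (1 + RL / zo + U ^ 2)) * (RL / (RL + zo)))
    (RLstar : ℝ) (hRLstar : RLstar = zo * Real.sqrt (1 + U ^ 2)) :
    ηres RLstar = U ^ 2 / (1 + Real.sqrt (1 + U ^ 2)) ^ 2 ∧
    ∀ RL > 0, ηres RL ≤ U ^ 2 / (1 + Real.sqrt (1 + U ^ 2)) ^ 2 :=
  optimal_load_maximizes_resonant_pte_general zo U hzo ηres hη RLstar hRLstar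
end

section
/- If Z is a complex symmetric N×N matrix with positive definite real part, partitioned as Z = [[Z_t, z_tr],[z_tr^T, z_r]], then the minimum-loss output impedance z_o = z_r − z_tr^T (Z_t')^{-1} z_tr' has positive real part, and the mutual coupling quality factor U = sqrt(z_tr^H (Z_t')^{-1} z_tr / z_o') is a well-defined positive real number (provided z_tr ≠ 0). -/
/-!
Write `a = Re z_tr`. The real part of `Z` is the block matrix `[[Z_t', a], [aᵀ, Re z_r]]`, and
`Re z_o = Re z_r - aᵀ (Z_t')⁻¹ a` is exactly the Schur complement of `Z_t'` in it, so it is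
positive because `Re Z` is positive definite. The same hypothesis makes `Z_t'`, hence `(Z_t')⁻¹`,
positive definite, and a real positive definite matrix stays positive definite over `ℂ`: its
quadratic form at `x + i y` is `xᵀ A x + yᵀ A y`. Hence `z_trᴴ (Z_t')⁻¹ z_tr` is a positive real
number, and so is `U`.
-/

open Matrix
open scoped ComplexOrder

namespace Matrix

theorem PosDef.toBlocks₁₁ {m n R : Type*} [Ring R] [PartialOrder R] [StarRing R]
    {M : Matrix (m ⊕ n) (m ⊕ n) R} (hM : M.PosDef) : M.toBlocks₁₁.PosDef :=
  hM.submatrix Sum.inl_injective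

theorem PosDef.schur_complement₁₁ {m n K : Type*} [Fintype m] [Fintype n] [DecidableEq m]
    [Field K] [PartialOrder K] [StarRing K] {A : Matrix m m K} {B : Matrix m n K}
    {D : Matrix n n K} (h : (fromBlocks A B Bᴴ D).PosDef) : (D - Bᴴ * A⁻¹ * B).PosDef := by
  have hA : A.PosDef := h.toBlocks₁₁
  let _ := hA.isUnit.invertible
  refine .of_dotProduct_mulVec_pos ((IsHermitian.fromBlocks₁₁ B D hA.1).mp h.1) fun y hy => ?_
  -- at this test vector the `A`-part of the Schur decomposition of the quadratic form vanishes
  have hv : (-((A⁻¹ * B) *ᵥ y)) ⊕ᵥ y ≠ 0 := fun h0 =>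
    hy (by simpa using congrArg (· ∘ Sum.inr) h0)
  have := h.dotProduct_mulVec_pos hv
  rwa [dotProduct_mulVec, schur_complement_eq₁₁ B D _ _ hA.1, neg_add_cancel, star_zero,
    zero_vecMul, zero_dotProduct, zero_add, ← dotProduct_mulVec] at this

variable {n : Type*} [Fintype n]

theorem star_dotProduct_map_ofReal_mulVec {A : Matrix n n ℝ} (hA : A.IsSymm) (v : n → ℂ) :
    star v ⬝ᵥ A.map (↑) *ᵥ v =
      ↑((fun i => (v i).re) ⬝ᵥ A *ᵥ (fun i => (v i).re) +
        (fun i => (v i).im) ⬝ᵥ A *ᵥ (fun i => (v i).im)) := by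
  have hswap (x y : n → ℝ) : x ⬝ᵥ A *ᵥ y = y ⬝ᵥ A *ᵥ x := by
    rw [dotProduct_mulVec, ← hA, vecMul_transpose, hA, dotProduct_comm]
  apply Complex.ext
  · simp only [dotProduct, mulVec, Pi.star_apply, Matrix.map_apply, Finset.mul_sum,
      Complex.re_sum, ← Finset.sum_add_distrib, Complex.ofReal_re]
    refine Finset.sum_congr rfl fun i _ => Finset.sum_congr rfl fun j _ => ?_
    simp [Complex.mul_re]
  · rw [Complex.ofReal_im, ← sub_eq_zero.mpr (hswap (fun i => (v i).re) (fun i => (v i).im))]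
    simp only [dotProduct, mulVec, Pi.star_apply, Matrix.map_apply, Finset.mul_sum,
      Complex.im_sum, ← Finset.sum_sub_distrib]
    refine Finset.sum_congr rfl fun i _ => Finset.sum_congr rfl fun j _ => ?_
    simp [Complex.mul_im]
    ring

theorem PosDef.map_ofReal {A : Matrix n n ℝ} (hA : A.PosDef) :
    (A.map ((↑) : ℝ → ℂ)).PosDef := by
  refine .of_dotProduct_mulVec_pos (hA.1.map _ fun x => by simp) fun v hv => ?_
  have hsymm : A.IsSymm := (conjTranspose_eq_transpose_of_trivial A).symm.trans hA.1
  rw [star_dotProduct_map_ofReal_mulVec hsymm, Complex.zero_lt_real]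
  have hnonneg (x : n → ℝ) : 0 ≤ x ⬝ᵥ A *ᵥ x := by
    simpa using hA.posSemidef.dotProduct_mulVec_nonneg x
  have hpos {x : n → ℝ} (hx : x ≠ 0) : 0 < x ⬝ᵥ A *ᵥ x := by
    simpa using hA.dotProduct_mulVec_pos hx
  by_cases hre : (fun i => (v i).re) = 0
  · have him : (fun i => (v i).im) ≠ 0 := fun him =>
      hv (funext fun i => Complex.ext (congrFun hre i) (congrFun him i))
    exact add_pos_of_nonneg_of_pos (hnonneg _) (hpos him)
  · exact add_pos_of_pos_of_nonneg (hpos hre) (hnonneg _)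

theorem re_dotProduct_map_ofReal_mulVec (v : n → ℂ) (M : Matrix n n ℝ) (w : n → ℝ) :
    (v ⬝ᵥ M.map (↑) *ᵥ fun i => (w i : ℂ)).re = (fun i => (v i).re) ⬝ᵥ M *ᵥ w := by
  simp [dotProduct, mulVec, Complex.re_sum, Finset.mul_sum]

end Matrix

theorem output_impedance_and_coupling_factor_pos_general
    {N : ℕ} (Zt : Matrix (Fin N) (Fin N) ℂ) (ztr : Fin N → ℂ) (zr : ℂ)
    (hztr : ztr ≠ 0)
    (Z : Matrix (Fin N ⊕ Unit) (Fin N ⊕ Unit) ℂ)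
    (hZ : Z = Matrix.fromBlocks Zt
        (Matrix.of fun i (_ : Unit) => ztr i)
        (Matrix.of fun (_ : Unit) j => ztr j)
        (Matrix.of fun (_ : Unit) (_ : Unit) => zr))
    (hZpd : (Matrix.of fun i j => (Z i j).re : Matrix (Fin N ⊕ Unit) (Fin N ⊕ Unit) ℝ).PosDef)
    (Zt' : Matrix (Fin N) (Fin N) ℝ)
    (hZt' : Zt' = Matrix.of fun i j => (Zt i j).re)
    (zo : ℂ)
    (hzo : zo = zr - ztr ⬝ᵥ ((Zt'⁻¹).map (Complex.ofReal)) *ᵥ (fun i => ((ztr i).re : ℂ)))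
    (U : ℝ)
    (hU : U = Real.sqrt ((star ztr ⬝ᵥ ((Zt'⁻¹).map (Complex.ofReal)) *ᵥ ztr).re / zo.re)) :
    0 < zo.re ∧
    (star ztr ⬝ᵥ ((Zt'⁻¹).map (Complex.ofReal)) *ᵥ ztr).im = 0 ∧
    0 < U := by
  set a : Fin N → ℝ := fun i => (ztr i).re
  have hblocks : (Matrix.of fun i j => (Z i j).re : Matrix (Fin N ⊕ Unit) (Fin N ⊕ Unit) ℝ) =
      fromBlocks Zt' (replicateCol Unit a) (replicateCol Unit a)ᴴ (of fun _ _ => zr.re) := by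
    subst hZ hZt'
    ext (i | i) (j | j) <;> rfl
  rw [hblocks] at hZpd
  have hZt'pd : Zt'.PosDef := hZpd.toBlocks₁₁
  have hzo_pos : 0 < zo.re := by
    have hschur := hZpd.schur_complement₁₁.diag_pos (i := ())
    rw [Matrix.sub_apply, conjTranspose_replicateCol, Matrix.mul_assoc, ← replicateCol_mulVec,
      replicateRow_mul_replicateCol_apply, star_trivial, of_apply] at hschur
    rwa [hzo, Complex.sub_re, re_dotProduct_map_ofReal_mulVec]
  obtain ⟨hre, him⟩ := Complex.pos_iff.mp (hZt'pd.inv.map_ofReal.dotProduct_mulVec_pos hztr)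
  exact ⟨hzo_pos, him.symm, hU ▸ Real.sqrt_pos.mpr (div_pos hre hzo_pos)⟩

/-- If `Z` is a complex symmetric matrix with positive definite real part,
partitioned as `Z = [[Z_t, z_tr],[z_trᵀ, z_r]]` with `z_tr ≠ 0`, then the
minimum-loss output impedance `z_o = z_r − z_trᵀ (Z_t')⁻¹ z_tr'` has positive real
part and the mutual coupling quality factor `U = √(z_trᴴ (Z_t')⁻¹ z_tr / z_o')` is a
well-defined positive real number. -/
theorem output_impedance_and_coupling_factor_pos
    {N : ℕ} (Zt : Matrix (Fin N) (Fin N) ℂ) (ztr : Fin N → ℂ) (zr : ℂ)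
    (hZt : Zt.IsSymm) (hztr : ztr ≠ 0)
    (Z : Matrix (Fin N ⊕ Unit) (Fin N ⊕ Unit) ℂ)
    (hZ : Z = Matrix.fromBlocks Zt
        (Matrix.of fun i (_ : Unit) => ztr i)
        (Matrix.of fun (_ : Unit) j => ztr j)
        (Matrix.of fun (_ : Unit) (_ : Unit) => zr))
    (hZpd : (Matrix.of fun i j => (Z i j).re : Matrix (Fin N ⊕ Unit) (Fin N ⊕ Unit) ℝ).PosDef)
    (Zt' : Matrix (Fin N) (Fin N) ℝ)
    (hZt' : Zt' = Matrix.of fun i j => (Zt i j).re)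
    (zo : ℂ)
    (hzo : zo = zr - ztr ⬝ᵥ ((Zt'⁻¹).map (Complex.ofReal)) *ᵥ (fun i => ((ztr i).re : ℂ)))
    (U : ℝ)
    (hU : U = Real.sqrt ((star ztr ⬝ᵥ ((Zt'⁻¹).map (Complex.ofReal)) *ᵥ ztr).re / zo.re)) :
    0 < zo.re ∧
    (star ztr ⬝ᵥ ((Zt'⁻¹).map (Complex.ofReal)) *ᵥ ztr).im = 0 ∧
    0 < U :=
  output_impedance_and_coupling_factor_pos_general Zt ztr zr hztr Z hZ hZpd Zt' hZt' zo hzo U hU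
end
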